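/- arXiv:1210.3003 — 7 statements merged into one kernel-verified Lean document; each statement's English description precedes it below -/
import Mathlib

section
/- Let r, N, k be positive integers with 1 ≤ k < r, and let x be an integer with |x/N - k/r| < 1/(Nk). Set a = 1/r - 1/N and assume a > 0. Then |Nk/x - r| ≤ 1/(a²N), where Nk/x is interpreted as a rational number (x ≠ 0 since x/N is within 1/(Nk) of k/r > 1/N). -/
/-!
Clearing denominators, the hypothesis says that `e = x r - N k` satisfies `|e| < r / k ≤ r`.
Since `N k / x - r = -e / x`, it suffices to bound `x` from below: `x r > N k - r / k ≥ N - r`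
gives `x > N / r - 1 = a N > 0`. Hence `|N k / x - r| < r / (a N) ≤ 1 / (a² N)`, the last step
because `a r = 1 - r / N < 1`.
-/

section

variable {K : Type*} [Field K] [LinearOrder K] [IsStrictOrderedRing K] {x N k r : K}

lemma abs_mul_sub_mul_lt_of_abs_div_sub_div_lt (hN : 0 < N) (hk : 0 < k) (hr : 0 < r)
    (hx : |x / N - k / r| < 1 / (N * k)) : |x * r - N * k| < r / k := by
  have hNr : 0 < N * r := mul_pos hN hr
  calc |x * r - N * k| = |x / N - k / r| * (N * r) := by
        rw [← abs_of_pos hNr, ← abs_mul]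
        congr 1
        field_simp
    _ < 1 / (N * k) * (N * r) := by gcongr
    _ = r / k := by field_simp

lemma sub_div_mul_lt_of_abs_mul_sub_mul_lt (hN : 0 < N) (hk : 1 ≤ k) (hr : 0 < r)
    (h : |x * r - N * k| < r / k) : (1 / r - 1 / N) * N < x := by
  have hNk : N ≤ N * k := le_mul_of_one_le_right hN.le hk
  have hrk : r / k ≤ r := div_le_self hr.le hk
  have hlow := (abs_lt.mp h).1
  rw [show (1 / r - 1 / N) * N = (N - r) / r by field_simp, div_lt_iff₀ hr]
  linarith

lemma abs_mul_div_sub_le_of_abs_div_sub_div_lt (hN : 0 < N) (hk : 1 ≤ k) (hr : 0 < r)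
    (ha : 0 < 1 / r - 1 / N) (hx : |x / N - k / r| < 1 / (N * k)) :
    |N * k / x - r| ≤ 1 / ((1 / r - 1 / N) ^ 2 * N) := by
  set a := 1 / r - 1 / N with ha_def
  have he := abs_mul_sub_mul_lt_of_abs_div_sub_div_lt hN (by linarith) hr hx
  have haN : a * N < x := sub_div_mul_lt_of_abs_mul_sub_mul_lt hN hk hr he
  have haN_pos : 0 < a * N := mul_pos ha hN
  have hx_pos : 0 < x := haN_pos.trans haN
  have har : a * r ≤ 1 := by
    rw [ha_def, show (1 / r - 1 / N) * r = 1 - r / N by field_simp]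
    linarith [div_pos hr hN]
  calc |N * k / x - r| = |x * r - N * k| / x := by
        rw [← abs_of_pos hx_pos, ← abs_div, abs_of_pos hx_pos, ← abs_neg]
        congr 1
        field_simp
        ring
    _ ≤ r / x := by gcongr; exact he.le.trans (div_le_self hr.le hk)
    _ ≤ r / (a * N) := by gcongr
    _ ≤ 1 / (a ^ 2 * N) := by
        rw [div_le_div_iff₀ haN_pos (by positivity)]
        nlinarith [mul_le_mul_of_nonneg_right har haN_pos.le]

end

theorem stmt_2_general (r N k : ℤ) (x : ℤ) (hr : 1 ≤ r) (hN : 1 ≤ N) (hk : 1 ≤ k)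
    (hx : |(x : ℚ) / N - (k : ℚ) / r| < 1 / (N * k))
    (a : ℚ) (ha : a = 1 / r - 1 / N) (hapos : 0 < a) :
    |(N : ℚ) * k / x - r| ≤ 1 / (a ^ 2 * N) := by
  subst ha
  exact abs_mul_div_sub_le_of_abs_div_sub_div_lt (by exact_mod_cast hN) (by exact_mod_cast hk)
    (by exact_mod_cast hr) hapos hx

theorem stmt_2 (r N k : ℤ) (x : ℤ) (hr : 1 ≤ r) (hN : 1 ≤ N) (hk : 1 ≤ k) (hkr : k < r)
    (hx : |(x : ℚ) / N - (k : ℚ) / r| < 1 / (N * k))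
    (a : ℚ) (ha : a = 1 / r - 1 / N) (hapos : 0 < a) :
    |(N : ℚ) * k / x - r| ≤ 1 / (a ^ 2 * N) :=
  stmt_2_general r N k x hr hN hk hx a ha hapos
end

section
/- Let B, r, k, ℓ, N, s be positive integers with r ≤ B, 1 ≤ k, ℓ ≤ r−1, s = 4B², N ≥ √2·s. Let x, y be integers with |x/N − k/r| ≤ 1/N and |y/N − ℓ/r| ≤ 1/N. Then the vector u = (−ℓ, k, s(−ℓ·x/N + k·y/N)) ∈ ℚ³ satisfies ‖u‖₂ ≤ 2B. -/
theorem stmt_3 (B r k l N s : ℤ) (hB : 1 ≤ B) (hrB : r ≤ B)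
    (hk : 1 ≤ k) (hk' : k ≤ r - 1) (hl : 1 ≤ l) (hl' : l ≤ r - 1)
    (hs : s = 4 * B ^ 2) (hN : (N : ℝ) ≥ Real.sqrt 2 * s)
    (x y : ℤ)
    (hx : |(x : ℚ) / N - (k : ℚ) / r| ≤ 1 / N)
    (hy : |(y : ℚ) / N - (l : ℚ) / r| ≤ 1 / N) :
    Real.sqrt (((-l : ℚ) : ℝ) ^ 2 + ((k : ℚ) : ℝ) ^ 2 +
      (((s : ℚ) * (-(l : ℚ) * x / N + (k : ℚ) * y / N) : ℚ) : ℝ) ^ 2) ≤ 2 * B := by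
  have hs0 : (0 : ℤ) < s := by nlinarith
  have hsR : (0 : ℝ) < (s : ℝ) := by exact_mod_cast hs0
  have hsqrt2 : (1 : ℝ) ≤ Real.sqrt 2 := by
    rw [show (1:ℝ) = Real.sqrt 1 by simp]
    exact Real.sqrt_le_sqrt (by norm_num)
  have hNR : (0 : ℝ) < (N : ℝ) := by nlinarith
  have hN0 : (0 : ℤ) < N := by exact_mod_cast hNR
  have hsq2 : Real.sqrt 2 ^ 2 = 2 := Real.sq_sqrt (by norm_num)
  have h0 : (0 : ℝ) ≤ Real.sqrt 2 * s := by positivity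
  have hmul : Real.sqrt 2 * (s:ℝ) * (Real.sqrt 2 * (s:ℝ)) = 2 * (s:ℝ) ^ 2 := by
    nlinarith [hsq2]
  have hN2R : 2 * (s : ℝ) ^ 2 ≤ (N : ℝ) ^ 2 := by
    have := mul_self_le_mul_self h0 hN
    nlinarith [this]
  have hrQ : ((r : ℚ)) ≠ 0 := Int.cast_ne_zero.mpr (by omega)
  have hNQ0 : (0 : ℚ) < (N : ℚ) := by exact_mod_cast hN0
  have hNQ : ((N : ℚ)) ≠ 0 := ne_of_gt hNQ0
  obtain ⟨t, htdef⟩ : ∃ t : ℚ, t = -(l : ℚ) * x / N + (k : ℚ) * y / N := ⟨_, rfl⟩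
  have ht : t = -(l : ℚ) * ((x : ℚ) / N - (k : ℚ) / r)
      + (k : ℚ) * ((y : ℚ) / N - (l : ℚ) / r) := by
    rw [htdef]; field_simp; ring
  have hlQ : (1 : ℚ) ≤ (l : ℚ) := by exact_mod_cast hl
  have hkQ : (1 : ℚ) ≤ (k : ℚ) := by exact_mod_cast hk
  have habs : |t| ≤ ((l : ℚ) + k) * (1 / N) := by
    rw [ht]
    calc |(-(l : ℚ)) * ((x : ℚ) / N - (k : ℚ) / r) + (k : ℚ) * ((y : ℚ) / N - (l : ℚ) / r)|
        ≤ |(-(l : ℚ)) * ((x : ℚ) / N - (k : ℚ) / r)| + |(k : ℚ) * ((y : ℚ) / N - (l : ℚ) / r)| :=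
          abs_add_le _ _
      _ = |(-(l : ℚ))| * |(x : ℚ) / N - (k : ℚ) / r| + |(k : ℚ)| * |(y : ℚ) / N - (l : ℚ) / r| := by
          rw [abs_mul, abs_mul]
      _ = (l : ℚ) * |(x : ℚ) / N - (k : ℚ) / r| + (k : ℚ) * |(y : ℚ) / N - (l : ℚ) / r| := by
          rw [abs_neg, abs_of_nonneg (by linarith : (0:ℚ) ≤ (l:ℚ)),
            abs_of_nonneg (by linarith : (0:ℚ) ≤ (k:ℚ))]
      _ ≤ (l : ℚ) * (1 / N) + (k : ℚ) * (1 / N) := by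
          apply add_le_add
          · exact mul_le_mul_of_nonneg_left hx (by linarith)
          · exact mul_le_mul_of_nonneg_left hy (by linarith)
      _ = ((l : ℚ) + k) * (1 / N) := by ring
  have ht2 : t ^ 2 * (N : ℚ) ^ 2 ≤ ((l : ℚ) + k) ^ 2 := by
    have h1 := abs_le.mp habs
    have h2 : t ^ 2 ≤ (((l : ℚ) + k) * (1 / N)) ^ 2 := by nlinarith [h1.1, h1.2]
    have h3 : (((l : ℚ) + k) * (1 / N)) ^ 2 * (N : ℚ) ^ 2 = ((l : ℚ) + k) ^ 2 := by
      field_simp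
    calc t ^ 2 * (N : ℚ) ^ 2 ≤ (((l : ℚ) + k) * (1 / N)) ^ 2 * (N : ℚ) ^ 2 :=
          mul_le_mul_of_nonneg_right h2 (sq_nonneg _)
      _ = ((l : ℚ) + k) ^ 2 := h3
  have hBQ : (1 : ℚ) ≤ (B : ℚ) := by exact_mod_cast hB
  have hkB : (k : ℚ) ≤ (B : ℚ) - 1 := by
    have : k ≤ B - 1 := by omega
    exact_mod_cast this
  have hlB : (l : ℚ) ≤ (B : ℚ) - 1 := by
    have : l ≤ B - 1 := by omega
    exact_mod_cast this
  have hN2 : 2 * s ^ 2 ≤ N ^ 2 := by exact_mod_cast hN2R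
  have hN2Q : 2 * (s : ℚ) ^ 2 ≤ (N : ℚ) ^ 2 := by exact_mod_cast hN2
  have hsQ0 : (0 : ℚ) < (s : ℚ) := by exact_mod_cast hs0
  have hpos : (0:ℚ) < 2 * (s:ℚ)^2 := by positivity
  have c1 : ((s:ℚ)*t)^2 * (2*(s:ℚ)^2) ≤ (2*((B:ℚ)-1)^2) * (2*(s:ℚ)^2) := by
    have e0 : t^2*(2*(s:ℚ)^2) ≤ t^2*(N:ℚ)^2 := mul_le_mul_of_nonneg_left hN2Q (sq_nonneg t)
    have h4 : ((l:ℚ)+k)^2 ≤ 4*((B:ℚ)-1)^2 := by nlinarith [hlB, hkB, hlQ, hkQ]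
    have e1 : (s:ℚ)^2*(t^2*(N:ℚ)^2) ≤ (s:ℚ)^2*(4*((B:ℚ)-1)^2) :=
      mul_le_mul_of_nonneg_left (le_trans ht2 h4) (sq_nonneg _)
    have e2 : (s:ℚ)^2*(t^2*(2*(s:ℚ)^2)) ≤ (s:ℚ)^2*(t^2*(N:ℚ)^2) :=
      mul_le_mul_of_nonneg_left e0 (sq_nonneg _)
    calc ((s:ℚ)*t)^2*(2*(s:ℚ)^2) = (s:ℚ)^2*(t^2*(2*(s:ℚ)^2)) := by ring
      _ ≤ (s:ℚ)^2*(4*((B:ℚ)-1)^2) := le_trans e2 e1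
      _ = (2*((B:ℚ)-1)^2)*(2*(s:ℚ)^2) := by ring
  have hst : ((s : ℚ) * t) ^ 2 ≤ 2 * ((B : ℚ) - 1) ^ 2 := le_of_mul_le_mul_right c1 hpos
  have hl0 : (0:ℚ) ≤ (l:ℚ) := le_trans zero_le_one hlQ
  have hk0 : (0:ℚ) ≤ (k:ℚ) := le_trans zero_le_one hkQ
  have hl2 : (l:ℚ)^2 ≤ ((B:ℚ)-1)^2 := pow_le_pow_left₀ hl0 hlB 2
  have hk2 : (k:ℚ)^2 ≤ ((B:ℚ)-1)^2 := pow_le_pow_left₀ hk0 hkB 2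
  have hB1 : ((B:ℚ)-1)^2 ≤ (B:ℚ)^2 :=
    pow_le_pow_left₀ (by linarith) (by linarith) 2
  have key : (-(l : ℚ)) ^ 2 + (k : ℚ) ^ 2 + ((s : ℚ) * t) ^ 2 ≤ (2 * (B : ℚ)) ^ 2 := by
    have e : (-(l : ℚ)) ^ 2 = (l:ℚ)^2 := by ring
    have e2 : (2 * (B : ℚ)) ^ 2 = 4 * (B:ℚ)^2 := by ring
    rw [e, e2]
    linarith
  have hB2 : (0 : ℝ) ≤ 2 * (B : ℝ) := by
    have : (1 : ℝ) ≤ (B : ℝ) := by exact_mod_cast hB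
    linarith
  have keyR : ((-l : ℚ) : ℝ) ^ 2 + ((k : ℚ) : ℝ) ^ 2 + (((s : ℚ) * t : ℚ) : ℝ) ^ 2
      ≤ (2 * (B : ℝ)) ^ 2 := by
    exact_mod_cast key
  rw [← htdef]
  calc Real.sqrt (((-l : ℚ) : ℝ) ^ 2 + ((k : ℚ) : ℝ) ^ 2 + (((s : ℚ) * t : ℚ) : ℝ) ^ 2)
      ≤ Real.sqrt ((2 * (B : ℝ)) ^ 2) := Real.sqrt_le_sqrt keyR
    _ = 2 * (B : ℝ) := Real.sqrt_sq hB2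
end

section
/- Let B, r, k, ℓ, N, s be positive integers with r ≤ B, 1 ≤ k, ℓ ≤ r−1, gcd(k, ℓ) = 1, s = 4B², and N ≥ √2·s. Let x, y be integers with |x/N − k/r| ≤ 1/N and |y/N − ℓ/r| ≤ 1/N. Let m, n be integers with (m, n) ≠ c·(−ℓ, k) for every integer c and with m² + n² ≤ 4B². Then the vector z = m·(1, 0, s·x/N) + n·(0, 1, s·y/N) ∈ ℚ³ satisfies ‖z‖₂ > 2B. -/
/-!
Since `x/N` and `y/N` approximate `k/r` and `l/r` to within `1/N`, the third coordinate
`s(mx + ny)/N` differs from `s(mk + nl)/r` by at most `s(|m| + |n|)/N ≤ √(m² + n²)`.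
Coprimality of `k` and `l` makes `mk + nl` a nonzero integer unless `(m, n)` is a multiple of
`(-l, k)`, so `|s(mk + nl)/r| ≥ s/B = 4B`. Writing `t = √(m² + n²)`, the squared norm is
`t² + z₃²` with `|z₃| ≥ 4B - t`, which is at least `8B² > 4B²`.
-/

theorem IsCoprime.exists_eq_mul_of_mul_add_mul_eq_zero {R : Type*} [CommRing R] {k l m n : R}
    (hkl : IsCoprime k l) (h : m * k + n * l = 0) : ∃ c, m = c * -l ∧ n = c * k := by
  obtain ⟨a, b, hab⟩ := hkl
  exact ⟨n * a - m * b, by linear_combination (-m) * hab + a * h,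
    by linear_combination (-n) * hab + b * h⟩

lemma abs_add_abs_le_sqrt_two_mul_sqrt (a b : ℝ) : |a| + |b| ≤ √2 * √(a ^ 2 + b ^ 2) := by
  rw [← Real.sqrt_mul zero_le_two, Real.le_sqrt (by positivity) (by positivity)]
  nlinarith [sq_abs a, sq_abs b, sq_nonneg (|a| - |b|)]

lemma abs_mul_add_mul_sub_mul_add_mul_le {K : Type*} [Field K] [LinearOrder K]
    [IsStrictOrderedRing K] {u v p q ε : K} (m n : K) (hu : |u - p| ≤ ε) (hv : |v - q| ≤ ε) :
    |m * u + n * v - (m * p + n * q)| ≤ (|m| + |n|) * ε :=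
  calc |m * u + n * v - (m * p + n * q)| = |m * (u - p) + n * (v - q)| := by ring_nf
    _ ≤ |m| * |u - p| + |n| * |v - q| := by simpa only [abs_mul] using abs_add_le (m * (u - p)) (n * (v - q))
    _ ≤ |m| * ε + |n| * ε := by gcongr
    _ = (|m| + |n|) * ε := by ring

lemma two_mul_sq_le_sq_add_sq {c t z : ℝ} (hc : 0 ≤ c) (ht : 0 ≤ t) (h : 2 * c - t ≤ |z|) :
    2 * c ^ 2 ≤ t ^ 2 + z ^ 2 := by
  rcases le_total t (2 * c) with htc | htc
  · nlinarith [sq_abs z, sq_nonneg (t - c), mul_self_le_mul_self (by linarith) h]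
  · nlinarith

lemma sub_sqrt_le_abs_third_coord {B r s N k l m n x y : ℝ} (hB : 0 < B) (hr : 0 < r)
    (hrB : r ≤ B) (hs : s = 4 * B ^ 2) (hN : √2 * s ≤ N)
    (hx : |x / N - k / r| ≤ 1 / N) (hy : |y / N - l / r| ≤ 1 / N) (hd : 1 ≤ |m * k + n * l|) :
    4 * B - √(m ^ 2 + n ^ 2) ≤ |m * s * x / N + n * s * y / N| := by
  have hs0 : 0 < s := by rw [hs]; positivity
  have hmain : 4 * B ≤ |s * ((m * k + n * l) / r)| :=
    calc 4 * B = s / B := by rw [hs]; field_simp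
      _ ≤ s / r := div_le_div_of_nonneg_left hs0.le hr hrB
      _ ≤ s / r * |m * k + n * l| := le_mul_of_one_le_right (by positivity) hd
      _ = |s * ((m * k + n * l) / r)| := by
        rw [abs_mul, abs_div, abs_of_pos hs0, abs_of_pos hr]; ring
  have herr : |s * (m * (x / N) + n * (y / N)) - s * ((m * k + n * l) / r)|
      ≤ √(m ^ 2 + n ^ 2) :=
    calc _ = s * |m * (x / N) + n * (y / N) - (m * (k / r) + n * (l / r))| := by
          rw [← mul_sub, abs_mul, abs_of_pos hs0]; ring_nf
      _ ≤ s * ((|m| + |n|) * (1 / N)) := by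
          gcongr; exact abs_mul_add_mul_sub_mul_add_mul_le m n hx hy
      _ ≤ s * ((|m| + |n|) * (1 / (√2 * s))) := by gcongr
      _ = (|m| + |n|) / √2 := by field_simp
      _ ≤ √(m ^ 2 + n ^ 2) := by
          rw [div_le_iff₀ (by positivity), mul_comm]
          exact abs_add_abs_le_sqrt_two_mul_sqrt m n
  have hz : m * s * x / N + n * s * y / N = s * (m * (x / N) + n * (y / N)) := by ring
  rw [hz]
  linarith [abs_sub_abs_le_abs_sub (s * ((m * k + n * l) / r)) (s * (m * (x / N) + n * (y / N))),
    abs_sub_comm (s * ((m * k + n * l) / r)) (s * (m * (x / N) + n * (y / N)))]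

theorem stmt_4_general (B r k l N s : ℤ) (hB : 1 ≤ B) (hrB : r ≤ B)
    (hk : 1 ≤ k) (hk' : k ≤ r - 1)
    (hgcd : Int.gcd k l = 1)
    (hs : s = 4 * B ^ 2) (hN : (N : ℝ) ≥ Real.sqrt 2 * s)
    (x y : ℤ)
    (hx : |(x : ℚ) / N - (k : ℚ) / r| ≤ 1 / N)
    (hy : |(y : ℚ) / N - (l : ℚ) / r| ≤ 1 / N)
    (m n : ℤ) (hmn : ∀ c : ℤ, ¬(m = c * (-l) ∧ n = c * k)) :
    Real.sqrt (((m : ℚ) : ℝ) ^ 2 + ((n : ℚ) : ℝ) ^ 2 +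
      (((m : ℚ) * s * x / N + (n : ℚ) * s * y / N : ℚ) : ℝ) ^ 2) > 2 * B := by
  have hd : m * k + n * l ≠ 0 := fun h =>
    let ⟨c, hc⟩ := (Int.isCoprime_iff_gcd_eq_one.2 hgcd).exists_eq_mul_of_mul_add_mul_eq_zero h
    hmn c hc
  have hBR : (1 : ℝ) ≤ B := by exact_mod_cast hB
  have hr : (0 : ℝ) < r := by exact_mod_cast (by omega : 0 < r)
  have hxR : |(x : ℝ) / N - k / r| ≤ 1 / N := by exact_mod_cast hx
  have hyR : |(y : ℝ) / N - l / r| ≤ 1 / N := by exact_mod_cast hy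
  have hdR : (1 : ℝ) ≤ |(m : ℝ) * k + n * l| := by exact_mod_cast Int.one_le_abs hd
  have hthird := sub_sqrt_le_abs_third_coord (B := B) (by linarith) hr (by exact_mod_cast hrB)
    (by exact_mod_cast hs) hN hxR hyR hdR
  have hsq := two_mul_sq_le_sq_add_sq (c := 2 * B) (by linarith) (Real.sqrt_nonneg _)
    (by linarith)
  rw [Real.sq_sqrt (by positivity)] at hsq
  push_cast
  rw [gt_iff_lt, Real.lt_sqrt (by linarith)]
  nlinarith

theorem stmt_4 (B r k l N s : ℤ) (hB : 1 ≤ B) (hrB : r ≤ B)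
    (hk : 1 ≤ k) (hk' : k ≤ r - 1) (hl : 1 ≤ l) (hl' : l ≤ r - 1)
    (hgcd : Int.gcd k l = 1)
    (hs : s = 4 * B ^ 2) (hN : (N : ℝ) ≥ Real.sqrt 2 * s) (hN1 : 1 ≤ N)
    (x y : ℤ)
    (hx : |(x : ℚ) / N - (k : ℚ) / r| ≤ 1 / N)
    (hy : |(y : ℚ) / N - (l : ℚ) / r| ≤ 1 / N)
    (m n : ℤ) (hmn : ∀ c : ℤ, ¬(m = c * (-l) ∧ n = c * k))
    (hbound : m ^ 2 + n ^ 2 ≤ 4 * B ^ 2) :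
    Real.sqrt (((m : ℚ) : ℝ) ^ 2 + ((n : ℚ) : ℝ) ^ 2 +
      (((m : ℚ) * s * x / N + (n : ℚ) * s * y / N : ℚ) : ℝ) ^ 2) > 2 * B :=
  stmt_4_general B r k l N s hB hrB hk hk' hgcd hs hN x y hx hy m n hmn
end

section
/- Let B, r, k, ℓ, N, s be positive integers with r ≤ B, 1 ≤ k, ℓ ≤ r−1, gcd(k, ℓ) = 1, s = 4B², and N ≥ √2·s. Let x = ⌊Nk/r⌉ and y = ⌊Nℓ/r⌉ (nearest integers). Consider the lattice L = ℤ·x⃗ + ℤ·y⃗ ⊆ ℚ³ where x⃗ = (1, 0, s·x/N) and y⃗ = (0, 1, s·y/N). Then u⃗ = (−ℓ)·x⃗ + k·y⃗ is, up to sign, the unique shortest nonzero vector of L. -/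
noncomputable def qnorm (v : Fin 3 → ℚ) : ℝ := Real.sqrt (∑ i, ((v i : ℝ)) ^ 2)

section aux

lemma stmt5_qnorm_eq (v : Fin 3 → ℚ) :
    qnorm v = Real.sqrt (((∑ i, (v i)^2 : ℚ) : ℝ)) := by
  unfold qnorm; congr 1; push_cast; rfl

lemma stmt5_qnorm_mono {v w : Fin 3 → ℚ} (h : (∑ i, (v i)^2) ≤ (∑ i, (w i)^2)) :
    qnorm v ≤ qnorm w := by
  rw [stmt5_qnorm_eq, stmt5_qnorm_eq]
  exact Real.sqrt_le_sqrt (by exact_mod_cast h)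

lemma stmt5_qnorm_mono' {v w : Fin 3 → ℚ} (h : qnorm v ≤ qnorm w) :
    (∑ i, (v i)^2) ≤ (∑ i, (w i)^2) := by
  rw [stmt5_qnorm_eq, stmt5_qnorm_eq] at h
  have hw : (0:ℚ) ≤ ∑ i, (w i)^2 := by positivity
  have := (Real.sqrt_le_sqrt_iff (by exact_mod_cast hw)).mp h
  exact_mod_cast this

lemma stmt5_absq (aq bq : ℚ) : (|aq| + |bq|)^2 ≤ 2*(aq^2 + bq^2) := by
  nlinarith [sq_nonneg (|aq| - |bq|), sq_abs aq, sq_abs bq]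

-- upper bound for the squared norm of u
lemma stmt5_ub (Bq rq kq lq Nq sq xq yq : ℚ)
    (hB : 2 ≤ Bq) (hrB : rq ≤ Bq) (hr : 2 ≤ rq)
    (hs : sq = 4*Bq^2) (hN : 0 < Nq) (hNs : 2*sq^2 ≤ Nq^2)
    (hk1 : 1 ≤ kq) (hk2 : kq ≤ Bq - 1) (hl1 : 1 ≤ lq) (hl2 : lq ≤ Bq - 1)
    (he1 : |xq - Nq*kq/rq| ≤ 1/2) (he2 : |yq - Nq*lq/rq| ≤ 1/2) :
    lq^2 + kq^2 + (sq*(-lq*xq + kq*yq)/Nq)^2 ≤ 5/2 * (Bq-1)^2 := by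
  have hs0 : 0 < sq := by nlinarith
  set D : ℚ := -lq*xq + kq*yq with hD
  have hd : D = -lq*(xq - Nq*kq/rq) + kq*(yq - Nq*lq/rq) := by
    rw [hD]; field_simp; ring
  have hDb : |D| ≤ Bq - 1 := by
    rw [hd]
    calc |(-lq)*(xq - Nq*kq/rq) + kq*(yq - Nq*lq/rq)|
        ≤ |(-lq)*(xq - Nq*kq/rq)| + |kq*(yq - Nq*lq/rq)| := abs_add_le _ _
      _ ≤ lq * (1/2) + kq * (1/2) := by
          rw [abs_mul, abs_mul, abs_neg, abs_of_pos (by linarith : (0:ℚ) < lq),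
            abs_of_pos (by linarith : (0:ℚ) < kq)]
          gcongr
      _ ≤ Bq - 1 := by linarith
  have hD2 : D^2 ≤ (Bq-1)^2 := by
    nlinarith [sq_abs D, abs_nonneg D]
  set c : ℚ := sq*D/Nq with hc
  have hcN : c * Nq = sq * D := by rw [hc]; field_simp
  have hc2 : c^2 ≤ (Bq-1)^2 / 2 := by
    have h1 : c^2*Nq^2 = sq^2*D^2 := by
      have := congrArg (fun z => z^2) hcN
      simpa [mul_pow] using this
    have e1 : c^2*(2*sq^2) ≤ c^2*Nq^2 := mul_le_mul_of_nonneg_left hNs (sq_nonneg c)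
    have e3 : sq^2*D^2 ≤ sq^2*((Bq-1)^2) := mul_le_mul_of_nonneg_left hD2 (sq_nonneg _)
    have e5 : sq^2*(2*c^2) ≤ sq^2*((Bq-1)^2) := by linarith
    have e6 : 2*c^2 ≤ (Bq-1)^2 := le_of_mul_le_mul_left e5 (pow_pos hs0 2)
    linarith
  have hkk : kq^2 ≤ (Bq-1)^2 := by nlinarith
  have hll : lq^2 ≤ (Bq-1)^2 := by nlinarith
  calc lq^2 + kq^2 + c^2 ≤ (Bq-1)^2 + (Bq-1)^2 + (Bq-1)^2/2 := by linarith
    _ = 5/2 * (Bq-1)^2 := by ring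

-- key strict inequality in the non-parallel case
set_option maxHeartbeats 1000000 in
lemma stmt5_key (Bq rq kq lq Nq sq xq yq aq bq tq : ℚ)
    (hB : 2 ≤ Bq) (hrB : rq ≤ Bq) (hr : 2 ≤ rq)
    (hs : sq = 4*Bq^2) (hN : 0 < Nq) (hNs : 2*sq^2 ≤ Nq^2)
    (hk1 : 1 ≤ kq) (hk2 : kq ≤ Bq - 1) (hl1 : 1 ≤ lq) (hl2 : lq ≤ Bq - 1)
    (he1 : |xq - Nq*kq/rq| ≤ 1/2) (he2 : |yq - Nq*lq/rq| ≤ 1/2)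
    (htq : tq = aq*kq + bq*lq) (ht1 : 1 ≤ |tq|) :
    lq^2 + kq^2 + (sq*(-lq*xq + kq*yq)/Nq)^2
      < aq^2 + bq^2 + (sq*(aq*xq+bq*yq)/Nq)^2 := by
  have hs0 : 0 < sq := by nlinarith
  have hr0 : (0:ℚ) < rq := by linarith
  have hub := stmt5_ub Bq rq kq lq Nq sq xq yq hB hrB hr hs hN hNs hk1 hk2 hl1 hl2 he1 he2
  have hB1 : (Bq-1)^2 < Bq^2 := by nlinarith
  by_cases hcase : 5/2*Bq^2 ≤ aq^2 + bq^2
  · nlinarith [sq_nonneg (sq*(aq*xq+bq*yq)/Nq)]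
  · push_neg at hcase
    set E : ℚ := aq*(xq - Nq*kq/rq) + bq*(yq - Nq*lq/rq) with hE
    set M : ℚ := (|aq| + |bq|)/2 with hM
    have hM0 : 0 ≤ M := by rw [hM]; positivity
    have hEb : |E| ≤ M := by
      rw [hE, hM]
      calc |aq*(xq - Nq*kq/rq) + bq*(yq - Nq*lq/rq)|
          ≤ |aq| * |xq - Nq*kq/rq| + |bq| * |yq - Nq*lq/rq| := by
            rw [← abs_mul, ← abs_mul]; exact abs_add_le _ _
        _ ≤ |aq| * (1/2) + |bq| * (1/2) := by gcongr <;> positivity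
        _ = (|aq| + |bq|)/2 := by ring
    have hM2 : M^2 < 5/4*Bq^2 := by
      have h1 : (|aq| + |bq|)^2 ≤ 2*(aq^2 + bq^2) := stmt5_absq aq bq
      rw [hM]
      linarith
    set P : ℚ := sq*M/Nq with hP
    have hPN : P * Nq = sq * M := by rw [hP]; field_simp
    have hP0 : 0 ≤ P := by rw [hP]; positivity
    have hPb : P < 4/5*Bq := by
      have h1 : P^2*Nq^2 = sq^2*M^2 := by
        have := congrArg (fun z => z^2) hPN
        simpa [mul_pow] using this
      have e1 : P^2*(2*sq^2) ≤ P^2*Nq^2 := mul_le_mul_of_nonneg_left hNs (sq_nonneg P)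
      have e3 : sq^2*M^2 < sq^2*(5/4*Bq^2) := (mul_lt_mul_iff_right₀ (pow_pos hs0 2)).mpr hM2
      have e5 : sq^2*(2*P^2) < sq^2*(5/4*Bq^2) := by linarith
      have e6 : 2*P^2 < 5/4*Bq^2 := lt_of_mul_lt_mul_left e5 (sq_nonneg sq)
      nlinarith [e6, hP0, hB]
    set T : ℚ := aq*xq + bq*yq with hT
    have hTE : rq * T = Nq*tq + rq*E := by
      rw [hT, hE, htq]; field_simp; ring
    have hTlow : rq * |T| ≥ Nq - rq*M := by
      have h1 : Nq ≤ Nq*|tq| := by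
        have := mul_le_mul_of_nonneg_left ht1 (le_of_lt hN)
        linarith
      have h2 : Nq*|tq| = |Nq*tq| := by rw [abs_mul, abs_of_pos hN]
      have h3 : |Nq*tq| ≤ rq*|T| + rq*|E| := by
        have he : Nq*tq = rq*T - rq*E := by rw [hTE]; ring
        rw [he]
        calc |rq*T - rq*E| ≤ |rq*T| + |rq*E| := abs_sub _ _
          _ = rq*|T| + rq*|E| := by rw [abs_mul, abs_mul, abs_of_pos hr0]
      have h4 : rq*|E| ≤ rq*M := mul_le_mul_of_nonneg_left hEb (by linarith)
      linarith
    set c : ℚ := sq*T/Nq with hc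
    have hcN : |c| * Nq = sq * |T| := by
      rw [hc, abs_div, abs_mul, abs_of_pos hN, abs_of_pos hs0]
      field_simp
    have h5 : (0:ℚ) ≤ |c| := abs_nonneg _
    have hclow : |c| ≥ 16/5*Bq := by
      have hh := mul_le_mul_of_nonneg_left hTlow (le_of_lt hs0)
      have hcNr : |c| * Nq * rq = sq * |T| * rq := by rw [hcN]
      have hPNr : rq*(P * Nq) = rq*(sq * M) := by rw [hPN]
      have h1 : |c| * Nq * rq ≥ sq*Nq - rq*(P*Nq) := by linarith
      have h2 : |c| * rq ≥ sq - rq*P :=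
        le_of_mul_le_mul_right (by linarith : (sq - rq*P)*Nq ≤ (|c| * rq)*Nq) hN
      have h3 : rq*P ≤ Bq*(4/5*Bq) := mul_le_mul hrB hPb.le hP0 (by linarith)
      have h4 : |c| * rq ≥ 4*Bq^2 - 4/5*Bq^2 := by linarith
      have h6 : |c| * rq ≤ |c| * Bq := mul_le_mul_of_nonneg_left hrB h5
      have h7 : (16/5*Bq)*Bq ≤ |c| * Bq := by linarith
      exact le_of_mul_le_mul_right h7 (by linarith)
    have hc2 : c^2 ≥ (16/5*Bq)^2 := by
      have h8 : (16/5*Bq)^2 ≤ |c|^2 := pow_le_pow_left₀ (by positivity) hclow 2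
      rw [sq_abs] at h8
      exact h8
    have hceq : (sq*(aq*xq+bq*yq)/Nq)^2 = c^2 := by rw [hc, hT]
    rw [hceq]
    have hBq2 : (0:ℚ) < Bq^2 := by positivity
    linarith [hub, hc2, hB1, sq_nonneg aq, sq_nonneg bq, hBq2]

end aux

set_option maxHeartbeats 1000000 in
theorem stmt_5 (B r k l N s : ℤ) (hB : 1 ≤ B) (hrB : r ≤ B)
    (hk : 1 ≤ k) (hk' : k ≤ r - 1) (hl : 1 ≤ l) (hl' : l ≤ r - 1)
    (hgcd : Int.gcd k l = 1)
    (hs : s = 4 * B ^ 2) (hN : (N : ℝ) ≥ Real.sqrt 2 * s) (hN1 : 1 ≤ N)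
    (x y : ℤ) (hx : x = round ((N * k : ℚ) / r)) (hy : y = round ((N * l : ℚ) / r))
    (xv yv uv : Fin 3 → ℚ)
    (hxv : xv = ![1, 0, (s : ℚ) * x / N]) (hyv : yv = ![0, 1, (s : ℚ) * y / N])
    (huv : uv = (-l : ℚ) • xv + (k : ℚ) • yv)
    (L : Set (Fin 3 → ℚ)) (hL : L = {w | ∃ a b : ℤ, w = (a : ℚ) • xv + (b : ℚ) • yv}) :
    uv ∈ L ∧ uv ≠ 0 ∧
      (∀ w ∈ L, w ≠ 0 → qnorm uv ≤ qnorm w) ∧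
      (∀ w ∈ L, w ≠ 0 → qnorm w ≤ qnorm uv → w = uv ∨ w = -uv) := by
  -- basic integer facts
  have hr2 : (2:ℤ) ≤ r := by linarith
  have hB2 : (2:ℤ) ≤ B := le_trans hr2 hrB
  have hs0 : (0:ℤ) < s := by nlinarith
  have hN0 : (0:ℤ) < N := hN1
  have hNs : 2 * s^2 ≤ N^2 := by
    have h2 : (0:ℝ) ≤ Real.sqrt 2 := Real.sqrt_nonneg 2
    have hsq : (Real.sqrt 2)^2 = 2 := Real.sq_sqrt (by norm_num)
    have hsR : (0:ℝ) < (s:ℝ) := by exact_mod_cast hs0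
    have h3 : (0:ℝ) ≤ (N:ℝ) - Real.sqrt 2 * (s:ℝ) := by linarith
    have h4 : (0:ℝ) ≤ (N:ℝ) + Real.sqrt 2 * (s:ℝ) := by nlinarith
    have : 2*(s:ℝ)^2 ≤ (N:ℝ)^2 := by nlinarith [mul_nonneg h3 h4]
    exact_mod_cast this
  -- rational versions
  have hNQ : (0:ℚ) < (N:ℚ) := by exact_mod_cast hN0
  have hrQ2 : (2:ℚ) ≤ (r:ℚ) := by exact_mod_cast hr2
  have hrBQ : (r:ℚ) ≤ (B:ℚ) := by exact_mod_cast hrB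
  have hBQ : (2:ℚ) ≤ (B:ℚ) := by exact_mod_cast hB2
  have hsQ : (s:ℚ) = 4*(B:ℚ)^2 := by exact_mod_cast hs
  have hNsQ : 2*(s:ℚ)^2 ≤ (N:ℚ)^2 := by exact_mod_cast hNs
  have hkQ1 : (1:ℚ) ≤ (k:ℚ) := by exact_mod_cast hk
  have hkQ2 : (k:ℚ) ≤ (B:ℚ) - 1 := by exact_mod_cast (by linarith : k ≤ B - 1)
  have hlQ1 : (1:ℚ) ≤ (l:ℚ) := by exact_mod_cast hl
  have hlQ2 : (l:ℚ) ≤ (B:ℚ) - 1 := by exact_mod_cast (by linarith : l ≤ B - 1)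
  -- rounding errors
  have he1 : |(x:ℚ) - (N:ℚ)*(k:ℚ)/(r:ℚ)| ≤ 1/2 := by
    rw [hx, abs_sub_comm]
    exact_mod_cast abs_sub_round ((N*k:ℚ)/(r:ℚ))
  have he2 : |(y:ℚ) - (N:ℚ)*(l:ℚ)/(r:ℚ)| ≤ 1/2 := by
    rw [hy, abs_sub_comm]
    exact_mod_cast abs_sub_round ((N*l:ℚ)/(r:ℚ))
  -- the squared norm of a lattice vector
  have hvec : ∀ a b : ℤ, (a:ℚ) • xv + (b:ℚ) • yv
      = ![(a:ℚ), (b:ℚ), (s:ℚ)*((a:ℚ)*(x:ℚ)+(b:ℚ)*(y:ℚ))/(N:ℚ)] := by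
    intro a b
    subst hxv hyv
    funext i
    fin_cases i <;> simp <;> ring
  have hsum : ∀ a b : ℤ, (∑ i, (((a:ℚ) • xv + (b:ℚ) • yv) i)^2)
      = (a:ℚ)^2 + (b:ℚ)^2 + ((s:ℚ)*((a:ℚ)*(x:ℚ)+(b:ℚ)*(y:ℚ))/(N:ℚ))^2 := by
    intro a b
    rw [hvec]
    simp [Fin.sum_univ_three]
  have huv' : uv = ((-l : ℤ):ℚ) • xv + ((k : ℤ):ℚ) • yv := by
    rw [huv]; norm_cast
  have hSu : (∑ i, (uv i)^2)
      = (l:ℚ)^2 + (k:ℚ)^2 + ((s:ℚ)*(-(l:ℚ)*(x:ℚ)+(k:ℚ)*(y:ℚ))/(N:ℚ))^2 := by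
    rw [huv', hsum (-l) k]
    push_cast
    ring
  -- positivity of the squared norm of uv
  have hSupos : (0:ℚ) < (l:ℚ)^2 + (k:ℚ)^2 + ((s:ℚ)*(-(l:ℚ)*(x:ℚ)+(k:ℚ)*(y:ℚ))/(N:ℚ))^2 := by
    nlinarith [sq_nonneg ((k:ℚ)), sq_nonneg ((s:ℚ)*(-(l:ℚ)*(x:ℚ)+(k:ℚ)*(y:ℚ))/(N:ℚ))]
  -- key strict inequality in the non-parallel case
  have hkey : ∀ a b : ℤ, a*k + b*l ≠ 0 →
      (l:ℚ)^2 + (k:ℚ)^2 + ((s:ℚ)*(-(l:ℚ)*(x:ℚ)+(k:ℚ)*(y:ℚ))/(N:ℚ))^2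
        < (a:ℚ)^2 + (b:ℚ)^2 + ((s:ℚ)*((a:ℚ)*(x:ℚ)+(b:ℚ)*(y:ℚ))/(N:ℚ))^2 := by
    intro a b ht
    have ht1 : 1 ≤ |((a*k+b*l : ℤ):ℚ)| := by
      have := Int.one_le_abs ht
      exact_mod_cast this
    have htq : ((a*k+b*l : ℤ):ℚ) = (a:ℚ)*(k:ℚ) + (b:ℚ)*(l:ℚ) := by push_cast; ring
    exact stmt5_key (B:ℚ) (r:ℚ) (k:ℚ) (l:ℚ) (N:ℚ) (s:ℚ) (x:ℚ) (y:ℚ) (a:ℚ) (b:ℚ)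
      ((a*k+b*l : ℤ):ℚ) hBQ hrBQ hrQ2 hsQ hNQ hNsQ hkQ1 hkQ2 hlQ1 hlQ2 he1 he2 htq ht1
  -- the parallel case
  have hpar : ∀ a b : ℤ, a*k + b*l = 0 →
      ∃ m : ℤ, (a:ℚ) • xv + (b:ℚ) • yv = (m:ℚ) • uv := by
    intro a b ht
    have hcop : IsCoprime (k:ℤ) l := Int.isCoprime_iff_gcd_eq_one.mpr hgcd
    have hdvd : l ∣ a := by
      have hd : l ∣ a * k := ⟨-b, by linarith⟩
      exact hcop.symm.dvd_of_dvd_mul_right hd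
    obtain ⟨m', hm'⟩ := hdvd
    have hl0 : l ≠ 0 := by omega
    have hb : b = -(m'*k) := by
      have h1 : l * (m'*k + b) = 0 := by
        have h2 := ht
        rw [hm'] at h2
        linear_combination h2
      rcases mul_eq_zero.mp h1 with h | h
      · exact absurd h hl0
      · linarith
    refine ⟨-m', ?_⟩
    rw [huv, hm', hb]
    push_cast
    module
  refine ⟨?_, ?_, ?_, ?_⟩
  · rw [hL]; exact ⟨-l, k, huv'⟩
  · intro h0
    have h00 : uv 0 = ((-l:ℤ):ℚ) := by rw [huv', hvec]; simp
    rw [h0] at h00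
    have h01 : ((-l:ℤ):ℚ) = 0 := h00.symm
    have h02 : (-l : ℤ) = 0 := by exact_mod_cast h01
    omega
  · intro w hw hw0
    rw [hL] at hw
    obtain ⟨a, b, rfl⟩ := hw
    apply stmt5_qnorm_mono
    rw [hSu, hsum]
    by_cases ht : a*k + b*l = 0
    · obtain ⟨m, hm⟩ := hpar a b ht
      have hm0 : m ≠ 0 := by
        intro h
        rw [h] at hm
        simp at hm
        exact hw0 hm
      have hfab : (∑ i, (((a:ℚ) • xv + (b:ℚ) • yv) i)^2) = (m:ℚ)^2 * (∑ i, (uv i)^2) := by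
        rw [hm]
        simp [Finset.mul_sum, mul_pow]
      rw [← hsum, hfab, hSu]
      have hm1 : (1:ℚ) ≤ (m:ℚ)^2 := by
        have hz : (1:ℤ) ≤ m^2 := by
          rcases lt_or_gt_of_ne hm0 with h | h <;> nlinarith
        exact_mod_cast hz
      nlinarith [hSupos]
    · exact le_of_lt (hkey a b ht)
  · intro w hw hw0 hle
    rw [hL] at hw
    obtain ⟨a, b, rfl⟩ := hw
    have hq := stmt5_qnorm_mono' hle
    by_cases ht : a*k + b*l = 0
    · obtain ⟨m, hm⟩ := hpar a b ht
      have hm0 : m ≠ 0 := by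
        intro h
        rw [h] at hm
        simp at hm
        exact hw0 hm
      have hfab : (∑ i, (((a:ℚ) • xv + (b:ℚ) • yv) i)^2) = (m:ℚ)^2 * (∑ i, (uv i)^2) := by
        rw [hm]
        simp [Finset.mul_sum, mul_pow]
      rw [hfab] at hq
      have hSup : (0:ℚ) < (∑ i, (uv i)^2) := by rw [hSu]; exact hSupos
      have hm2 : m^2 ≤ 1 := by
        by_contra hcon
        push_neg at hcon
        have h2m : (2:ℚ) ≤ (m:ℚ)^2 := by exact_mod_cast (by nlinarith : (2:ℤ) ≤ m^2)
        nlinarith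
      have habs : m = 1 ∨ m = -1 := by
        have h1 : |m| ≤ 1 := by nlinarith [abs_nonneg m, sq_abs m]
        have h2 : 1 ≤ |m| := Int.one_le_abs hm0
        have h3 : |m| = 1 := le_antisymm h1 h2
        rcases (abs_eq (by norm_num : (0:ℤ) ≤ 1)).mp h3 with h | h
        · exact Or.inl h
        · exact Or.inr h
      rcases habs with h | h
      · left; rw [hm, h]; simp
      · right; rw [hm, h]; simp
    · exfalso
      have hk2 := hkey a b ht
      rw [hSu, hsum] at hq
      linarith
end

section
/- Let u, v be vectors in ℝᵈ with u ≠ 0, ‖u‖ ≤ ‖v‖, and 0 ≤ u·v ≤ (1/2)‖u‖². If β is an integer with |β| ≥ 2 and α is any integer, then ‖β·v + α·u‖ ≥ √3·‖u‖ > ‖u‖. -/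
open RealInnerProductSpace

theorem stmt_10 (d : ℕ) (u v : EuclideanSpace ℝ (Fin d)) (hu : u ≠ 0)
    (h1 : ‖u‖ ≤ ‖v‖) (h2 : 0 ≤ ⟪u, v⟫) (h3 : ⟪u, v⟫ ≤ (1/2) * ‖u‖ ^ 2)
    (β α : ℤ) (hβ : 2 ≤ |β|) :
    ‖(β : ℝ) • v + (α : ℝ) • u‖ ≥ Real.sqrt 3 * ‖u‖ ∧ Real.sqrt 3 * ‖u‖ > ‖u‖ := by
  have ha : 0 < ‖u‖ := norm_pos_iff.mpr hu
  set a := ‖u‖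
  set b := ‖v‖
  set t := ⟪u, v⟫
  have hb2 : 4 ≤ (β : ℝ) ^ 2 := by
    have : (2:ℝ) ≤ |(β:ℝ)| := by exact_mod_cast hβ
    nlinarith [sq_abs (β:ℝ)]
  have hexp : ‖(β : ℝ) • v + (α : ℝ) • u‖ ^ 2
      = (β:ℝ)^2 * b^2 + 2 * (β:ℝ) * (α:ℝ) * t + (α:ℝ)^2 * a^2 := by
    have hvu : ⟪v, u⟫ = t := (real_inner_comm v u).symm
    rw [norm_add_sq_real, norm_smul, norm_smul, real_inner_smul_left,
      real_inner_smul_right, hvu]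
    simp [mul_pow, sq_abs]
    ring
  have key : 3 * a ^ 2 ≤ ‖(β : ℝ) • v + (α : ℝ) • u‖ ^ 2 := by
    rw [hexp]
    have hab : a * a ≤ b * b := mul_self_le_mul_self ha.le h1
    have h6 : a^2 * a^2 ≤ a^2 * b^2 := by nlinarith [mul_pos ha ha]
    have h5 : t^2 ≤ (a^2 * a^2) / 4 := by nlinarith
    have h4 : t^2 ≤ a^2 * b^2 := by nlinarith
    have hmain : 3 * a^2 * a^2 ≤ ((β:ℝ)^2 * b^2 + 2 * (β:ℝ) * (α:ℝ) * t + (α:ℝ)^2 * a^2) * a^2 := by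
      nlinarith [sq_nonneg ((α:ℝ) * a^2 + (β:ℝ) * t),
        mul_nonneg (by nlinarith : (0:ℝ) ≤ (β:ℝ)^2 - 4) (by nlinarith : (0:ℝ) ≤ a^2*b^2 - t^2)]
    exact le_of_mul_le_mul_right hmain (by positivity)
  have h13 : (1:ℝ) < Real.sqrt 3 := by
    have := Real.sq_sqrt (by norm_num : (3:ℝ) ≥ 0)
    nlinarith [Real.sqrt_nonneg 3]
  constructor
  · have : Real.sqrt (3 * a ^ 2) ≤ Real.sqrt (‖(β : ℝ) • v + (α : ℝ) • u‖ ^ 2) :=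
      Real.sqrt_le_sqrt key
    rw [Real.sqrt_sq (norm_nonneg _), Real.sqrt_mul (by norm_num : (0:ℝ) ≤ 3),
      Real.sqrt_sq ha.le] at this
    exact this
  · nlinarith
end

section
/- Let r ≥ 2 and let k, ℓ be chosen independently and uniformly at random from {0, 1, …, r−1}. Then the probability that gcd(k, ℓ) = 1 is greater than 1/2, i.e., the number of pairs (k, ℓ) ∈ {0,…,r−1}² with gcd(k, ℓ) = 1 exceeds r²/2. -/
/-!
A pair with `gcd ≠ 1` either has both coordinates divisible by 2 or by 3, which by
inclusion–exclusion covers about `n² / 3` pairs, or its gcd is `g = 6k + 5` or `g = 6k + 7`.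
Dividing by `g` maps the pairs with gcd `g` injectively to coprime pairs in `[0, ⌈n/g⌉)²`, and at
most `3/4` of any square grid is coprime because two even numbers are not. Since the `1/g²` of
these `g` sum to at most `1/9`, at most `(1/3 + 1/9) n² + O(n)` pairs are not coprime, which is
below `n² / 2` as soon as `n ≥ 36`; the smaller grids are checked by computation.
-/

open Finset

namespace CoprimeGrid

def gcdPairs (n g : ℕ) : Finset (ℕ × ℕ) :=
  (range n ×ˢ range n).filter fun p => Nat.gcd p.1 p.2 = g

def dvdPairs (n d : ℕ) : Finset (ℕ × ℕ) :=
  (range n ×ˢ range n).filter fun p => d ∣ p.1 ∧ d ∣ p.2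

lemma card_filter_dvd_range (n : ℕ) {d : ℕ} (hd : 0 < d) :
    #{x ∈ range n | d ∣ x} = n ⌈/⌉ d := by
  have hmul : {x ∈ range n | d ∣ x} =
      (range (n ⌈/⌉ d)).map ⟨(· * d), mul_left_injective₀ hd.ne'⟩ := by
    ext x
    simp only [mem_filter, mem_range, mem_map, Function.Embedding.coeFn_mk,
      Nat.ceilDiv_eq_add_pred_div, Nat.lt_div_iff_mul_lt hd]
    constructor
    · rintro ⟨hx, k, rfl⟩
      exact ⟨k, by rw [mul_comm]; omega, mul_comm _ _⟩
    · rintro ⟨k, hk, rfl⟩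
      exact ⟨by omega, dvd_mul_left _ _⟩
  rw [hmul, card_map, card_range]

lemma card_dvdPairs (n : ℕ) {d : ℕ} (hd : 0 < d) :
    (dvdPairs n d).card = (n ⌈/⌉ d) ^ 2 := by
  rw [dvdPairs, filter_product (fun a => d ∣ a) (fun b => d ∣ b), card_product,
    card_filter_dvd_range n hd, sq]

lemma card_gcdPairs_le (n : ℕ) {g : ℕ} (hg : 0 < g) :
    (gcdPairs n g).card ≤ (gcdPairs (n ⌈/⌉ g) 1).card := by
  have quot_lt {a : ℕ} (ha : a < n) (hga : g ∣ a) : a / g < n ⌈/⌉ g := by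
    rw [Nat.ceilDiv_eq_add_pred_div, Nat.lt_div_iff_mul_lt hg, Nat.div_mul_cancel hga]
    omega
  refine card_le_card_of_injOn (fun p => (p.1 / g, p.2 / g)) ?_ ?_
  · rintro ⟨a, b⟩ hp
    simp only [gcdPairs, coe_filter, mem_product, mem_range, Set.mem_ofPred_eq] at hp ⊢
    obtain ⟨⟨ha, hb⟩, rfl⟩ := hp
    exact ⟨⟨quot_lt ha (Nat.gcd_dvd_left a b), quot_lt hb (Nat.gcd_dvd_right a b)⟩,
      Nat.coprime_div_gcd_div_gcd hg⟩
  · rintro ⟨a, b⟩ hp ⟨a', b'⟩ hp' h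
    simp only [gcdPairs, coe_filter, mem_product, mem_range, Set.mem_ofPred_eq,
      Prod.mk.injEq] at hp hp' h ⊢
    obtain ⟨-, rfl⟩ := hp
    obtain ⟨-, hgcd⟩ := hp'
    exact ⟨(Nat.div_left_inj (Nat.gcd_dvd_left a b) (hgcd ▸ Nat.gcd_dvd_left a' b')).mp h.1,
      (Nat.div_left_inj (Nat.gcd_dvd_right a b) (hgcd ▸ Nat.gcd_dvd_right a' b')).mp h.2⟩

lemma four_mul_card_gcdPairs_one_le (m : ℕ) : 4 * (gcdPairs m 1).card ≤ 3 * m ^ 2 := by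
  have hdisj : Disjoint (gcdPairs m 1) (dvdPairs m 2) := by
    rw [gcdPairs, dvdPairs, disjoint_filter]
    rintro ⟨a, b⟩ _ hab ⟨ha, hb⟩
    have := Nat.dvd_gcd ha hb
    rw [hab] at this
    omega
  have hsub : gcdPairs m 1 ∪ dvdPairs m 2 ⊆ range m ×ˢ range m :=
    union_subset (filter_subset _ _) (filter_subset _ _)
  have hcard := card_le_card hsub
  rw [card_union_of_disjoint hdisj, card_dvdPairs m two_pos, card_product, card_range] at hcard
  have : m ≤ 2 * (m ⌈/⌉ 2) := by rw [Nat.ceilDiv_eq_add_pred_div]; omega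
  nlinarith

lemma four_mul_card_gcdPairs_le (n : ℕ) {g : ℕ} (hg : 0 < g) :
    4 * (gcdPairs n g).card ≤ 3 * (n ⌈/⌉ g) ^ 2 :=
  (Nat.mul_le_mul_left 4 (card_gcdPairs_le n hg)).trans (four_mul_card_gcdPairs_one_le _)

lemma card_dvdPairs_two_union_three (n : ℕ) :
    (dvdPairs n 2 ∪ dvdPairs n 3).card + (n ⌈/⌉ 6) ^ 2 = (n ⌈/⌉ 2) ^ 2 + (n ⌈/⌉ 3) ^ 2 := by
  have hinter : dvdPairs n 2 ∩ dvdPairs n 3 = dvdPairs n 6 := by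
    rw [dvdPairs, dvdPairs, dvdPairs, ← filter_and]
    refine filter_congr fun p _ => ?_
    omega
  have h := card_union_add_card_inter (dvdPairs n 2) (dvdPairs n 3)
  rw [hinter, card_dvdPairs n two_pos, card_dvdPairs n three_pos,
    card_dvdPairs n (by norm_num : 0 < 6)] at h
  exact h

lemma filter_gcd_ne_one_subset (n : ℕ) :
    (range n ×ˢ range n).filter (fun p => Nat.gcd p.1 p.2 ≠ 1) ⊆
      (dvdPairs n 2 ∪ dvdPairs n 3) ∪
        (range (n / 6)).biUnion fun k => gcdPairs n (6 * k + 5) ∪ gcdPairs n (6 * k + 7) := by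
  rintro ⟨a, b⟩ hp
  simp only [mem_filter, mem_product, mem_range] at hp
  obtain ⟨⟨ha, hb⟩, hne⟩ := hp
  have hlt : Nat.gcd a b < n := by
    rcases Nat.eq_zero_or_pos a with rfl | hpos
    · simpa using hb
    · exact (Nat.gcd_le_left b hpos).trans_lt ha
  have hmem (g : ℕ) (hg : Nat.gcd a b = g) : (a, b) ∈ gcdPairs n g := by
    simp [gcdPairs, ha, hb, hg]
  by_cases h2 : 2 ∣ Nat.gcd a b
  · exact mem_union_left _ (mem_union_left _ (by
      simp [dvdPairs, ha, hb, h2.trans (Nat.gcd_dvd_left a b), h2.trans (Nat.gcd_dvd_right a b)]))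
  by_cases h3 : 3 ∣ Nat.gcd a b
  · exact mem_union_left _ (mem_union_right _ (by
      simp [dvdPairs, ha, hb, h3.trans (Nat.gcd_dvd_left a b), h3.trans (Nat.gcd_dvd_right a b)]))
  refine mem_union_right _ (mem_biUnion.mpr ?_)
  rw [Nat.dvd_iff_mod_eq_zero] at h2 h3
  rcases Nat.lt_or_ge (Nat.gcd a b % 6) 3 with hmod | hmod
  · exact ⟨Nat.gcd a b / 6 - 1, mem_range.mpr (by omega), mem_union_right _ (hmem _ (by omega))⟩
  · exact ⟨Nat.gcd a b / 6, mem_range.mpr (by omega), mem_union_left _ (hmem _ (by omega))⟩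

lemma card_filter_gcd_ne_one_le (n : ℕ) :
    ((range n ×ˢ range n).filter (fun p => Nat.gcd p.1 p.2 ≠ 1)).card ≤
      (dvdPairs n 2 ∪ dvdPairs n 3).card +
        ∑ k ∈ range (n / 6), ((gcdPairs n (6 * k + 5)).card + (gcdPairs n (6 * k + 7)).card) :=
  (card_le_card (filter_gcd_ne_one_subset n)).trans <| (card_union_le _ _).trans <|
    add_le_add le_rfl (card_biUnion_le.trans (sum_le_sum fun _ _ => card_union_le _ _))

lemma sum_inv_sq_coprime_six_le (K : ℕ) :
    ∑ k ∈ range K, (1 / (6 * k + 5 : ℚ) ^ 2 + 1 / (6 * k + 7 : ℚ) ^ 2) ≤ 1 / 9 := by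
  suffices h : ∑ k ∈ range K, (1 / (6 * k + 5 : ℚ) ^ 2 + 1 / (6 * k + 7 : ℚ) ^ 2) ≤
      1 / 9 - 1 / (3 * (6 * (K : ℚ) + 3)) by
    linarith [show (0 : ℚ) ≤ 1 / (3 * (6 * (K : ℚ) + 3)) by positivity]
  induction K with
  | zero => norm_num
  | succ K ih =>
    have step : 1 / (6 * K + 5 : ℚ) ^ 2 + 1 / (6 * K + 7 : ℚ) ^ 2 ≤
        1 / (3 * (6 * K + 3)) - 1 / (3 * (6 * (K + 1) + 3)) := by
      have hK : (0 : ℚ) ≤ K := K.cast_nonneg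
      rw [div_add_div _ _ (by positivity) (by positivity),
        div_sub_div _ _ (by positivity) (by positivity), div_le_div_iff₀ (by positivity)
          (by nlinarith)]
      nlinarith [pow_nonneg hK 3, pow_nonneg hK 4, pow_nonneg hK 5]
    rw [sum_range_succ]
    push_cast
    linarith

lemma ceilDiv_sq_le (n : ℕ) {g : ℕ} (hg : 0 < g) :
    ((n ⌈/⌉ g : ℕ) : ℚ) ^ 2 ≤ 4 / 3 * n ^ 2 / g ^ 2 + 4 := by
  have hg' : (0 : ℚ) < g := by exact_mod_cast hg
  have hle : ((n ⌈/⌉ g : ℕ) : ℚ) ≤ n / g + 1 := by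
    rw [Nat.ceilDiv_eq_add_pred_div]
    calc (((n + g - 1) / g : ℕ) : ℚ) ≤ ((n + g - 1 : ℕ) : ℚ) / g := Nat.cast_div_le
      _ ≤ (n + g) / g := by gcongr; norm_cast; omega
      _ = n / g + 1 := by field_simp
  have hsq : 4 / 3 * (n : ℚ) ^ 2 / g ^ 2 = 4 / 3 * (n / g) ^ 2 := by ring
  rw [hsq]
  nlinarith [sq_nonneg ((n : ℚ) / g - 3), Nat.cast_nonneg (α := ℚ) (n ⌈/⌉ g),
    div_nonneg n.cast_nonneg hg'.le]

lemma sum_ceilDiv_sq_le (n K : ℕ) :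
    ((∑ k ∈ range K, ((n ⌈/⌉ (6 * k + 5)) ^ 2 + (n ⌈/⌉ (6 * k + 7)) ^ 2) : ℕ) : ℚ) ≤
      4 / 27 * n ^ 2 + 8 * K := by
  calc ((∑ k ∈ range K, ((n ⌈/⌉ (6 * k + 5)) ^ 2 + (n ⌈/⌉ (6 * k + 7)) ^ 2) : ℕ) : ℚ)
      ≤ ∑ k ∈ range K,
          (4 / 3 * n ^ 2 * (1 / (6 * k + 5 : ℚ) ^ 2 + 1 / (6 * k + 7 : ℚ) ^ 2) + 8) := by
        push_cast
        refine sum_le_sum fun k _ => ?_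
        have h5 := ceilDiv_sq_le n (g := 6 * k + 5) (by omega)
        have h7 := ceilDiv_sq_le n (g := 6 * k + 7) (by omega)
        push_cast at h5 h7
        linarith [show 4 / 3 * (n : ℚ) ^ 2 * (1 / (6 * k + 5 : ℚ) ^ 2 + 1 / (6 * k + 7 : ℚ) ^ 2) =
          4 / 3 * n ^ 2 / (6 * k + 5) ^ 2 + 4 / 3 * n ^ 2 / (6 * k + 7) ^ 2 by ring]
    _ = 4 / 3 * n ^ 2 *
          ∑ k ∈ range K, (1 / (6 * k + 5 : ℚ) ^ 2 + 1 / (6 * k + 7 : ℚ) ^ 2) + 8 * K := by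
        rw [sum_add_distrib, ← mul_sum, sum_const, card_range, nsmul_eq_mul, mul_comm (K : ℚ)]
    _ ≤ 4 / 3 * n ^ 2 * (1 / 9) + 8 * K := by
        gcongr
        exact sum_inv_sq_coprime_six_le K
    _ = 4 / 27 * n ^ 2 + 8 * K := by ring

lemma two_mul_card_filter_gcd_ne_one_lt {n : ℕ} (hn : 36 ≤ n) :
    2 * ((range n ×ˢ range n).filter (fun p => Nat.gcd p.1 p.2 ≠ 1)).card < n ^ 2 := by
  have hcover := card_filter_gcd_ne_one_le n
  have hunion := card_dvdPairs_two_union_three n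
  have hceil := sum_ceilDiv_sq_le n (n / 6)
  set X := ((range n ×ˢ range n).filter (fun p => Nat.gcd p.1 p.2 ≠ 1)).card
  set U := (dvdPairs n 2 ∪ dvdPairs n 3).card
  set S := ∑ k ∈ range (n / 6), ((gcdPairs n (6 * k + 5)).card + (gcdPairs n (6 * k + 7)).card)
  set T := ∑ k ∈ range (n / 6), ((n ⌈/⌉ (6 * k + 5)) ^ 2 + (n ⌈/⌉ (6 * k + 7)) ^ 2)
  have hfibers : 4 * S ≤ 3 * T := by
    rw [mul_sum, mul_sum]
    refine sum_le_sum fun k _ => ?_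
    have h5 := four_mul_card_gcdPairs_le n (g := 6 * k + 5) (by omega)
    have h7 := four_mul_card_gcdPairs_le n (g := 6 * k + 7) (by omega)
    omega
  have hcover' : (X : ℚ) ≤ U + S := by exact_mod_cast hcover
  have hunion' : (U : ℚ) + (n ⌈/⌉ 6 : ℕ) ^ 2 = (n ⌈/⌉ 2 : ℕ) ^ 2 + (n ⌈/⌉ 3 : ℕ) ^ 2 := by
    exact_mod_cast hunion
  have hfibers' : 4 * (S : ℚ) ≤ 3 * T := by exact_mod_cast hfibers
  have h2 : 2 * ((n ⌈/⌉ 2 : ℕ) : ℚ) ≤ n + 1 := by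
    exact_mod_cast (show 2 * (n ⌈/⌉ 2) ≤ n + 1 by rw [Nat.ceilDiv_eq_add_pred_div]; omega)
  have h3 : 3 * ((n ⌈/⌉ 3 : ℕ) : ℚ) ≤ n + 2 := by
    exact_mod_cast (show 3 * (n ⌈/⌉ 3) ≤ n + 2 by rw [Nat.ceilDiv_eq_add_pred_div]; omega)
  have h6 : (n : ℚ) ≤ 6 * (n ⌈/⌉ 6 : ℕ) := by
    exact_mod_cast (show n ≤ 6 * (n ⌈/⌉ 6) by rw [Nat.ceilDiv_eq_add_pred_div]; omega)
  have hK : 6 * ((n / 6 : ℕ) : ℚ) ≤ n := by exact_mod_cast Nat.mul_div_le n 6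
  have hn' : (36 : ℚ) ≤ n := by exact_mod_cast hn
  -- these give `2 X ≤ (8/9) n² + (35/9) n + 25/18`
  suffices (2 * X : ℚ) < n ^ 2 by exact_mod_cast this
  nlinarith [mul_le_mul h2 h2 (by positivity) (by positivity),
    mul_le_mul h3 h3 (by positivity) (by positivity),
    mul_le_mul h6 h6 (by positivity) (by positivity)]

set_option maxRecDepth 4000 in
lemma sq_lt_two_mul_card_gcdPairs_one {n : ℕ} (hn : 2 ≤ n) : n ^ 2 < 2 * (gcdPairs n 1).card := by
  rcases Nat.lt_or_ge n 36 with hsmall | hlarge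
  · interval_cases n <;> decide
  · have hsplit := card_filter_add_card_filter_not (s := range n ×ˢ range n)
      (fun p => Nat.gcd p.1 p.2 = 1)
    have hnon := two_mul_card_filter_gcd_ne_one_lt hlarge
    simp only [ne_eq] at hnon
    rw [card_product, card_range, ← sq] at hsplit
    rw [gcdPairs]
    omega

end CoprimeGrid

theorem stmt_15 (r : ℕ) (hr : 2 ≤ r) :
    2 * ((Finset.range r ×ˢ Finset.range r).filter
      (fun p => Nat.gcd p.1 p.2 = 1)).card > r ^ 2 :=
  CoprimeGrid.sq_lt_two_mul_card_gcdPairs_one hr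
end

section
/- Let u, v be linearly independent integer vectors in ℤᵈ with max(‖u‖, ‖v‖) = M. The Gauss lattice-basis-reduction algorithm (repeat: swap so ‖u‖ ≤ ‖v‖, then replace v by the shortest vector ±(v − m·u) making an acute angle with u; stop when ‖u‖ ≤ ‖v‖ after the replacement) terminates after at most ⌈log_√3 M⌉ + 1 iterations. -/
/-!
After every step the new second vector is reduced against the first one,
`|⟪u, v⟫| ≤ ‖u‖² / 2`. If the following step does not stop, the shorter vector `v` of that pair
must satisfy `3‖v‖² < ‖u‖²`: otherwise no vector `u - m v` is shorter than `v`. Hence from the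
first step on, every step that does not stop shrinks the shorter vector by a factor `√3`. That
vector has length at most `M` after the first step, and at least `1` throughout, because the step
preserves linear independence and integrality. This leaves room for at most
`⌈log_√3 M⌉ + 1` steps.
-/

open RealInnerProductSpace

/-- One iteration of the Gauss lattice-basis-reduction algorithm:
first swap so that `‖u‖ ≤ ‖v‖`, then replace `v` by the shortest vector
`ε • (v - m • u)` (with `m = [(u·v)/‖u‖²]` the nearest integer, ties upward,
and the sign `ε` chosen so that the result makes an acute angle with `u`). -/
noncomputable def gaussStep (d : ℕ)
    (p : EuclideanSpace ℝ (Fin d) × EuclideanSpace ℝ (Fin d)) :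
    EuclideanSpace ℝ (Fin d) × EuclideanSpace ℝ (Fin d) :=
  let u := if ‖p.1‖ ≤ ‖p.2‖ then p.1 else p.2
  let v := if ‖p.1‖ ≤ ‖p.2‖ then p.2 else p.1
  let f : ℝ := ⟪u, v⟫ / ‖u‖ ^ 2
  let m : ℤ := ⌈f - 1/2⌉
  let ε : ℝ := if 0 ≤ f - m then 1 else -1
  (u, ε • (v - (m : ℝ) • u))

section InnerProductSpace

variable {E : Type*} [NormedAddCommGroup E] [InnerProductSpace ℝ E]

noncomputable def gaussReduce (u v : E) : E :=
  let f : ℝ := ⟪u, v⟫ / ‖u‖ ^ 2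
  let m : ℤ := ⌈f - 1/2⌉
  (if 0 ≤ f - m then (1 : ℝ) else -1) • (v - (m : ℝ) • u)

lemma exists_gaussReduce_eq (u v : E) :
    ∃ m : ℤ, gaussReduce u v = v - (m : ℝ) • u ∨ gaussReduce u v = -(v - (m : ℝ) • u) := by
  refine ⟨⌈⟪u, v⟫ / ‖u‖ ^ 2 - 1/2⌉, ?_⟩
  dsimp only [gaussReduce]
  split_ifs <;> simp

lemma exists_norm_gaussReduce_eq (u v : E) :
    ∃ m : ℤ, ‖gaussReduce u v‖ = ‖v - (m : ℝ) • u‖ := by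
  obtain ⟨m, h | h⟩ := exists_gaussReduce_eq u v
  · exact ⟨m, by rw [h]⟩
  · exact ⟨m, by rw [h, norm_neg]⟩

lemma gaussReduce_mem {L : AddSubgroup E} {u v : E} (hu : u ∈ L) (hv : v ∈ L) :
    gaussReduce u v ∈ L := by
  obtain ⟨m, h | h⟩ := exists_gaussReduce_eq u v <;> rw [h, Int.cast_smul_eq_zsmul]
  · exact sub_mem hv (zsmul_mem hu m)
  · exact neg_mem (sub_mem hv (zsmul_mem hu m))

lemma LinearIndependent.pair_gaussReduce {u v : E} (h : LinearIndependent ℝ ![u, v]) :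
    LinearIndependent ℝ ![u, gaussReduce u v] := by
  obtain ⟨m, hm⟩ := exists_gaussReduce_eq u v
  have hsub : LinearIndependent ℝ ![u, v - (m : ℝ) • u] := by
    rwa [sub_eq_neg_add, ← neg_smul, LinearIndependent.pair_add_smul_right_iff]
  rcases hm with hm | hm <;> rw [hm]
  · exact hsub
  · rwa [LinearIndependent.pair_neg_right_iff]

lemma abs_inner_gaussReduce_le (u v : E) : |⟪u, gaussReduce u v⟫| ≤ ‖u‖ ^ 2 / 2 := by
  set f : ℝ := ⟪u, v⟫ / ‖u‖ ^ 2
  set m : ℤ := ⌈f - 1/2⌉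
  have hfm : |f - m| ≤ 1 / 2 := abs_le.mpr
    ⟨by linarith [Int.ceil_lt_add_one (f - 1/2)], by linarith [Int.le_ceil (f - 1/2)]⟩
  have hinner : ⟪u, v - (m : ℝ) • u⟫ = (f - m) * ‖u‖ ^ 2 := by
    rcases eq_or_ne u 0 with rfl | hu
    · simp
    · rw [inner_sub_right, real_inner_smul_right, real_inner_self_eq_norm_sq, sub_mul,
        div_mul_cancel₀ _ (by positivity)]
  have hsign : |(if 0 ≤ f - m then (1 : ℝ) else -1)| = 1 := by split_ifs <;> simp
  calc |⟪u, gaussReduce u v⟫| = |f - m| * ‖u‖ ^ 2 := by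
        rw [gaussReduce, real_inner_smul_right, hinner, abs_mul, hsign, one_mul, abs_mul,
          abs_of_nonneg (sq_nonneg ‖u‖)]
    _ ≤ 1 / 2 * ‖u‖ ^ 2 := by gcongr
    _ = ‖u‖ ^ 2 / 2 := by ring

lemma norm_le_norm_sub_intCast_smul {a b : E} (m : ℤ) (hred : |⟪a, b⟫| ≤ ‖a‖ ^ 2 / 2)
    (h3 : ‖a‖ ^ 2 ≤ 3 * ‖b‖ ^ 2) (hba : ‖b‖ ≤ ‖a‖) : ‖b‖ ≤ ‖a - (m : ℝ) • b‖ := by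
  set μ : ℝ := (m : ℝ)
  have hab2 : ‖b‖ ^ 2 ≤ ‖a‖ ^ 2 := by gcongr
  -- `‖a - μ b‖² - ‖b‖²` is at least this product, whose sign is settled case by case on `|m|`
  have hprod : 0 ≤ (|μ| - 1) * ((|μ| + 1) * ‖b‖ ^ 2 - ‖a‖ ^ 2) := by
    have hμ : |μ| = ((|m| : ℤ) : ℝ) := by simp [μ]
    rcases (show |m| = 0 ∨ |m| = 1 ∨ 2 ≤ |m| by have := abs_nonneg m; omega) with h | h | h
    · rw [hμ, h]; norm_num; linarith
    · rw [hμ, h]; norm_num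
    · have h' : (2 : ℝ) ≤ |μ| := by rw [hμ]; exact_mod_cast h
      apply mul_nonneg <;> nlinarith
  have hcross : 2 * (μ * ⟪a, b⟫) ≤ |μ| * ‖a‖ ^ 2 := by
    calc 2 * (μ * ⟪a, b⟫) ≤ 2 * (|μ| * |⟪a, b⟫|) := by
          rw [← abs_mul]; linarith [le_abs_self (μ * ⟪a, b⟫)]
      _ ≤ |μ| * ‖a‖ ^ 2 := by nlinarith [abs_nonneg μ]
  have hsq : ‖b‖ ^ 2 ≤ ‖a - μ • b‖ ^ 2 := by
    rw [norm_sub_sq_real, real_inner_smul_right, norm_smul, mul_pow, Real.norm_eq_abs, sq_abs]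
    nlinarith [sq_abs μ]
  exact pow_le_pow_iff_left₀ (norm_nonneg _) (norm_nonneg _) two_ne_zero |>.mp hsq

end InnerProductSpace

section EuclideanSpace

variable {d : ℕ}

lemma gaussStep_eq_ite (p : EuclideanSpace ℝ (Fin d) × EuclideanSpace ℝ (Fin d)) :
    gaussStep d p =
      if ‖p.1‖ ≤ ‖p.2‖ then (p.1, gaussReduce p.1 p.2) else (p.2, gaussReduce p.2 p.1) := by
  unfold gaussStep gaussReduce
  split_ifs <;> rfl

lemma norm_fst_gaussStep (p : EuclideanSpace ℝ (Fin d) × EuclideanSpace ℝ (Fin d)) :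
    ‖(gaussStep d p).1‖ = min ‖p.1‖ ‖p.2‖ := by
  rw [gaussStep_eq_ite]
  split_ifs with h
  · exact (min_eq_left h).symm
  · exact (min_eq_right (le_of_not_ge h)).symm

lemma abs_inner_gaussStep_le (p : EuclideanSpace ℝ (Fin d) × EuclideanSpace ℝ (Fin d)) :
    |⟪(gaussStep d p).1, (gaussStep d p).2⟫| ≤ ‖(gaussStep d p).1‖ ^ 2 / 2 := by
  rw [gaussStep_eq_ite]
  split_ifs <;> exact abs_inner_gaussReduce_le _ _

lemma sqrt_three_mul_norm_fst_gaussStep_lt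
    {q : EuclideanSpace ℝ (Fin d) × EuclideanSpace ℝ (Fin d)}
    (hred : |⟪q.1, q.2⟫| ≤ ‖q.1‖ ^ 2 / 2) (hq : ‖q.2‖ < ‖q.1‖)
    (hstep : ‖(gaussStep d q).2‖ < ‖(gaussStep d q).1‖) :
    √3 * ‖(gaussStep d q).1‖ < ‖q.1‖ := by
  rw [gaussStep_eq_ite, if_neg hq.not_ge] at hstep ⊢
  obtain ⟨m, hm⟩ := exists_norm_gaussReduce_eq q.2 q.1
  have h3 : 3 * ‖q.2‖ ^ 2 < ‖q.1‖ ^ 2 := by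
    by_contra! h3
    exact hstep.not_ge (hm ▸ norm_le_norm_sub_intCast_smul m hred h3 hq.le)
  refine lt_of_pow_lt_pow_left₀ 2 (norm_nonneg _) ?_
  rwa [mul_pow, Real.sq_sqrt zero_le_three]

lemma sqrt_three_pow_mul_norm_fst_iterate_gaussStep_le
    (p : EuclideanSpace ℝ (Fin d) × EuclideanSpace ℝ (Fin d)) (k : ℕ)
    (hcont : ∀ j, 1 ≤ j → j ≤ k + 1 →
      ‖((gaussStep d)^[j] p).2‖ < ‖((gaussStep d)^[j] p).1‖) :
    √3 ^ k * ‖((gaussStep d)^[k + 1] p).1‖ ≤ max ‖p.1‖ ‖p.2‖ := by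
  induction k with
  | zero => simp [norm_fst_gaussStep]
  | succ k ih =>
    set q := (gaussStep d)^[k + 1] p
    have hq : (gaussStep d)^[k + 1 + 1] p = gaussStep d q := Function.iterate_succ_apply' _ _ _
    have hred : |⟪q.1, q.2⟫| ≤ ‖q.1‖ ^ 2 / 2 := by
      rw [show q = gaussStep d ((gaussStep d)^[k] p) from Function.iterate_succ_apply' _ _ _]
      exact abs_inner_gaussStep_le _
    have hshrink := sqrt_three_mul_norm_fst_gaussStep_lt hred (hcont (k + 1) le_add_self
      (by omega)) (hq ▸ hcont (k + 2) (by omega) le_rfl)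
    calc √3 ^ (k + 1) * ‖((gaussStep d)^[k + 1 + 1] p).1‖
        = √3 ^ k * (√3 * ‖(gaussStep d q).1‖) := by rw [hq]; ring
      _ ≤ √3 ^ k * ‖q.1‖ := by gcongr
      _ ≤ max ‖p.1‖ ‖p.2‖ := ih fun j hj hjk => hcont j hj (by omega)

def intVectors (d : ℕ) : AddSubgroup (EuclideanSpace ℝ (Fin d)) where
  carrier := {x | ∀ i, ∃ z : ℤ, x i = z}
  zero_mem' i := ⟨0, by simp⟩
  add_mem' hx hy i := by
    obtain ⟨a, ha⟩ := hx i
    obtain ⟨b, hb⟩ := hy i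
    exact ⟨a + b, by simp [ha, hb]⟩
  neg_mem' hx i := by
    obtain ⟨a, ha⟩ := hx i
    exact ⟨-a, by simp [ha]⟩

lemma one_le_norm_of_mem_intVectors {x : EuclideanSpace ℝ (Fin d)} (hx : x ∈ intVectors d)
    (h0 : x ≠ 0) : 1 ≤ ‖x‖ := by
  obtain ⟨i, hi⟩ : ∃ i, x i ≠ 0 := by
    by_contra! h
    exact h0 (by ext i; simpa using h i)
  obtain ⟨z, hz⟩ := hx i
  have hz0 : z ≠ 0 := by rintro rfl; simp [hz] at hi
  calc (1 : ℝ) ≤ |(z : ℝ)| := by exact_mod_cast Int.one_le_abs hz0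
    _ = ‖x i‖ := by rw [hz, Real.norm_eq_abs]
    _ ≤ ‖x‖ := PiLp.norm_apply_le x i

def IsPairBasisIn (L : AddSubgroup (EuclideanSpace ℝ (Fin d)))
    (p : EuclideanSpace ℝ (Fin d) × EuclideanSpace ℝ (Fin d)) : Prop :=
  LinearIndependent ℝ ![p.1, p.2] ∧ p.1 ∈ L ∧ p.2 ∈ L

lemma IsPairBasisIn.gaussStep {L : AddSubgroup (EuclideanSpace ℝ (Fin d))}
    {p : EuclideanSpace ℝ (Fin d) × EuclideanSpace ℝ (Fin d)} (h : IsPairBasisIn L p) :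
    IsPairBasisIn L (gaussStep d p) := by
  obtain ⟨hind, h1, h2⟩ := h
  rw [gaussStep_eq_ite]
  split_ifs
  · exact ⟨hind.pair_gaussReduce, h1, gaussReduce_mem h1 h2⟩
  · exact ⟨(LinearIndependent.pair_symm_iff.mp hind).pair_gaussReduce, h2, gaussReduce_mem h2 h1⟩

lemma one_le_norm_snd_iterate_gaussStep
    {p : EuclideanSpace ℝ (Fin d) × EuclideanSpace ℝ (Fin d)} (hp : IsPairBasisIn (intVectors d) p)
    (n : ℕ) : 1 ≤ ‖((gaussStep d)^[n] p).2‖ := by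
  obtain ⟨hind, -, h2⟩ := Function.Iterate.rec (IsPairBasisIn (intVectors d)) hp
    (fun _ => IsPairBasisIn.gaussStep) n
  exact one_le_norm_of_mem_intVectors h2 (by simpa using hind.ne_zero 1)

end EuclideanSpace

/-- The Gauss algorithm on a basis of length `M` terminates (the stopping
condition `‖u‖ ≤ ‖v‖` holds after the replacement step) within at most
`⌈log_√3 M⌉ + 1` iterations. -/
theorem stmt_16 (d : ℕ) (u v : EuclideanSpace ℝ (Fin d))
    (hind : LinearIndependent ℝ ![u, v])
    (hint : ∀ i, ∃ zu zv : ℤ, u i = zu ∧ v i = zv)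
    (M : ℝ) (hM : M = max ‖u‖ ‖v‖) :
    ∃ j : ℕ, 1 ≤ j ∧ (j : ℝ) ≤ ⌈Real.logb (Real.sqrt 3) M⌉ + 1 ∧
      ‖((gaussStep d)^[j] (u, v)).1‖ ≤ ‖((gaussStep d)^[j] (u, v)).2‖ := by
  have hbasis : IsPairBasisIn (intVectors d) (u, v) :=
    ⟨hind, fun i => by obtain ⟨a, -, ha, -⟩ := hint i; exact ⟨a, ha⟩,
      fun i => by obtain ⟨-, b, -, hb⟩ := hint i; exact ⟨b, hb⟩⟩
  have hsnd := one_le_norm_snd_iterate_gaussStep hbasis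
  have hM1 : 1 ≤ M := hM ▸ (hsnd 0).trans (le_max_right _ _)
  have hsqrt3 : 1 < √3 := by rw [Real.lt_sqrt zero_le_one]; norm_num
  set C := ⌈Real.logb √3 M⌉
  set k := C.toNat
  have hkC : (k : ℝ) = C := by
    exact_mod_cast Int.toNat_of_nonneg (Int.ceil_nonneg (Real.logb_nonneg hsqrt3 hM1))
  have hMk : M ≤ √3 ^ k := by
    rw [← Real.rpow_natCast, ← Real.logb_le_iff_le_rpow hsqrt3 (by linarith), hkC]
    exact Int.le_ceil _
  by_contra! hcont
  have hcontk : ∀ j, 1 ≤ j → j ≤ k + 1 →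
      ‖((gaussStep d)^[j] (u, v)).2‖ < ‖((gaussStep d)^[j] (u, v)).1‖ := fun j hj hjk =>
    hcont j hj (by rw [← hkC]; exact_mod_cast hjk)
  have hchain := sqrt_three_pow_mul_norm_fst_iterate_gaussStep_le (u, v) k hcontk
  have hlong : 1 < ‖((gaussStep d)^[k + 1] (u, v)).1‖ :=
    (hsnd _).trans_lt (hcontk (k + 1) le_add_self le_rfl)
  exact hMk.not_gt <|
    (lt_mul_of_one_lt_right (by positivity) hlong).trans_le (hchain.trans_eq hM.symm)
end
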